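/- Let L ≥ 1, let N, n, and m_1,…,m_L be positive integers, let p be a probability vector on a set of size N, let k ∈ {1,…,N} be an index with π := p_k, let e_k be the corresponding one-hot vector, and let w > 0 and γ ∈ ℝ be scalars. Let W be an N × n real matrix whose singular values all lie in [a^W, b^W] with 0 ≤ a^W; for each j ∈ {1,…,L} let J_j be an n × n real matrix whose singular values all lie in [a_j^J, b_j^J] with 0 ≤ a_j^J; and for each l ∈ {1,…,L} let G_l be an n × m_l real matrix whose singular values all lie in [a_l^G, b_l^G] with 0 ≤ a_l^G. For each l define the row vector g_l := γ · w · (e_k − p) · W · (J_L J_{L−1} ⋯ J_l) · G_l, and set ‖g‖₂ := √(∑_{l=1}^L ‖g_l‖₂²). Then (w(1 − π)|γ|/√L) · ∑_{l=1}^L (a^W a_l^G ∏_{j=l}^L a_j^J) ≤ ‖g‖₂ ≤ √2 · w(1 − π)|γ| · ∑_{l=1}^L (b^W b_l^G ∏_{j=l}^L b_j^J). -/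

import Mathlib

/-!
Right multiplication by a real matrix whose singular values lie in `[a, b]` scales the Euclidean
norm of a row vector by a factor in `[a, b]`: `‖x A‖² = x (A Aᵀ) xᵀ`, and expanding `x` in an
orthonormal eigenbasis of `A Aᵀ` bounds this Rayleigh quotient by the extreme eigenvalues. Chaining
this through `W`, the `J_j` and `G_l` bounds each block `‖g_l‖` by `w |γ| ‖e_k − p‖` times the
products of the `a`'s resp. `b`'s, and `1 − π ≤ ‖e_k − p‖ ≤ √2 (1 − π)` because
`∑_{j ≠ k} p_j² ≤ (∑_{j ≠ k} p_j)² = (1 − π)²`. The blocks are combined by Cauchy–Schwarz,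
`∑ ‖g_l‖ ≤ √L ‖g‖`, from below and by `‖g‖ ≤ ∑ ‖g_l‖` from above.
-/

open Matrix Finset

/-- Euclidean norm of a (row) vector: `√(∑ j, x j ^ 2)`. -/
noncomputable def euclNorm {ι : Type*} [Fintype ι] (x : ι → ℝ) : ℝ :=
  Real.sqrt (∑ j, x j ^ 2)

/-- The singular values of a real matrix `M`, i.e. the square roots of the
eigenvalues of the positive semidefinite matrix `M * Mᵀ`. -/
noncomputable def singularValues {N M : ℕ} (A : Matrix (Fin N) (Fin M) ℝ) : Fin N → ℝ :=
  fun i => Real.sqrt ((Matrix.isHermitian_mul_conjTranspose_self A).eigenvalues i)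

/-- `descProd J l c = J (l+c-1) * J (l+c-2) * ⋯ * J l`, the descending product of
`c` consecutive square matrices starting from index `l`. -/
noncomputable def descProd {n : ℕ} (J : ℕ → Matrix (Fin n) (Fin n) ℝ) :
    ℕ → ℕ → Matrix (Fin n) (Fin n) ℝ
  | _, 0 => 1
  | l, c + 1 => J (l + c) * descProd J l c

section EuclNorm

variable {ι : Type*} [Fintype ι]

theorem euclNorm_eq_sqrt_dotProduct (x : ι → ℝ) : euclNorm x = √(x ⬝ᵥ x) := by
  simp only [euclNorm, dotProduct, sq]

theorem euclNorm_nonneg (x : ι → ℝ) : 0 ≤ euclNorm x :=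
  Real.sqrt_nonneg _

theorem euclNorm_smul (r : ℝ) (x : ι → ℝ) : euclNorm (r • x) = |r| * euclNorm x := by
  simp only [euclNorm, Pi.smul_apply, smul_eq_mul, mul_pow, ← mul_sum]
  rw [Real.sqrt_mul (sq_nonneg r), Real.sqrt_sq_eq_abs]

variable [DecidableEq ι]

theorem sum_sq_single_sub (p : ι → ℝ) (k : ι) :
    ∑ j, ((Pi.single k 1 : ι → ℝ) - p) j ^ 2 = (1 - p k) ^ 2 + ∑ j ∈ univ.erase k, p j ^ 2 := by
  rw [← add_sum_erase _ _ (mem_univ k)]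
  congr 1
  · simp
  · refine sum_congr rfl fun j hj => ?_
    simp [Pi.single_eq_of_ne (ne_of_mem_erase hj)]

theorem one_sub_le_euclNorm_single_sub (p : ι → ℝ) (k : ι) :
    1 - p k ≤ euclNorm ((Pi.single k 1 : ι → ℝ) - p) := by
  rw [euclNorm, sum_sq_single_sub]
  exact (le_abs_self _).trans <| Real.abs_le_sqrt <|
    le_add_of_nonneg_right <| sum_nonneg fun j _ => sq_nonneg (p j)

theorem euclNorm_single_sub_le {p : ι → ℝ} (hp : ∀ j, 0 ≤ p j) (hsum : ∑ j, p j = 1) (k : ι) :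
    euclNorm ((Pi.single k 1 : ι → ℝ) - p) ≤ √2 * (1 - p k) := by
  have hrest : ∑ j ∈ univ.erase k, p j = 1 - p k := by
    rw [sum_erase_eq_sub (mem_univ k), hsum]
  have hrest_sq : ∑ j ∈ univ.erase k, p j ^ 2 ≤ (1 - p k) ^ 2 :=
    hrest ▸ sum_sq_le_sq_sum_of_nonneg fun j _ => hp j
  have hpk : 0 ≤ 1 - p k := hrest ▸ sum_nonneg fun j _ => hp j
  rw [euclNorm, sum_sq_single_sub, Real.sqrt_le_left (mul_nonneg (Real.sqrt_nonneg 2) hpk),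
    mul_pow, Real.sq_sqrt zero_le_two]
  linarith

end EuclNorm

section Aggregation

variable {ι : Type*} {s : Finset ι} {f g : ι → ℝ}

theorem sum_div_sqrt_card_le_sqrt_sum_sq (hfg : ∀ i ∈ s, f i ≤ g i) :
    (∑ i ∈ s, f i) / √(#s : ℝ) ≤ √(∑ i ∈ s, g i ^ 2) := by
  refine div_le_of_le_mul₀ (Real.sqrt_nonneg _) (Real.sqrt_nonneg _) ?_
  calc ∑ i ∈ s, f i ≤ ∑ i ∈ s, g i := sum_le_sum hfg
    _ ≤ √(#s * ∑ i ∈ s, g i ^ 2) :=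
      Real.le_sqrt_of_sq_le sq_sum_le_card_mul_sum_sq
    _ = √(∑ i ∈ s, g i ^ 2) * √(#s : ℝ) := by
      rw [Real.sqrt_mul (Nat.cast_nonneg _), mul_comm]

theorem sqrt_sum_sq_le_sum (hf : ∀ i ∈ s, 0 ≤ f i) (hfg : ∀ i ∈ s, f i ≤ g i) :
    √(∑ i ∈ s, f i ^ 2) ≤ ∑ i ∈ s, g i := by
  have hg : ∀ i ∈ s, 0 ≤ g i := fun i hi => (hf i hi).trans (hfg i hi)
  rw [Real.sqrt_le_left (sum_nonneg hg)]
  calc ∑ i ∈ s, f i ^ 2 ≤ ∑ i ∈ s, g i ^ 2 :=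
        sum_le_sum fun i hi => pow_le_pow_left₀ (hf i hi) (hfg i hi) 2
    _ ≤ (∑ i ∈ s, g i) ^ 2 := sum_sq_le_sq_sum_of_nonneg hg

end Aggregation

namespace Matrix.IsHermitian

variable {n : Type*} [Fintype n] [DecidableEq n] {A : Matrix n n ℝ}

theorem sum_sq_dotProduct_eigenvectorBasis (hA : A.IsHermitian) (x : n → ℝ) :
    ∑ i, (hA.eigenvectorBasis i ⬝ᵥ x) ^ 2 = x ⬝ᵥ x := by
  have := hA.eigenvectorBasis.sum_inner_mul_inner (WithLp.toLp 2 x) (WithLp.toLp 2 x)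
  simp only [EuclideanSpace.inner_eq_star_dotProduct, star_trivial] at this
  simpa only [sq, dotProduct_comm x] using this

theorem dotProduct_mulVec_eq_sum_eigenvalues (hA : A.IsHermitian) (x : n → ℝ) :
    x ⬝ᵥ A *ᵥ x = ∑ i, hA.eigenvalues i * (hA.eigenvectorBasis i ⬝ᵥ x) ^ 2 := by
  have hsymm (i : n) : hA.eigenvectorBasis i ⬝ᵥ A *ᵥ x =
      hA.eigenvalues i * (hA.eigenvectorBasis i ⬝ᵥ x) := by
    rw [dotProduct_mulVec, ← mulVec_transpose, ← conjTranspose_eq_transpose_of_trivial, hA.eq,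
      hA.mulVec_eigenvectorBasis, smul_dotProduct, smul_eq_mul]
  have := hA.eigenvectorBasis.sum_inner_mul_inner (WithLp.toLp 2 x) (WithLp.toLp 2 (A *ᵥ x))
  simp only [EuclideanSpace.inner_eq_star_dotProduct, star_trivial] at this
  rw [dotProduct_comm, ← this]
  refine sum_congr rfl fun i _ => ?_
  rw [dotProduct_comm (A *ᵥ x), hsymm]
  ring

theorem mul_dotProduct_self_le_dotProduct_mulVec (hA : A.IsHermitian) {c : ℝ}
    (h : ∀ i, c ≤ hA.eigenvalues i) (x : n → ℝ) : c * (x ⬝ᵥ x) ≤ x ⬝ᵥ A *ᵥ x := by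
  rw [hA.dotProduct_mulVec_eq_sum_eigenvalues, ← hA.sum_sq_dotProduct_eigenvectorBasis, mul_sum]
  gcongr with i
  exact h i

theorem dotProduct_mulVec_le_mul_dotProduct_self (hA : A.IsHermitian) {C : ℝ}
    (h : ∀ i, hA.eigenvalues i ≤ C) (x : n → ℝ) : x ⬝ᵥ A *ᵥ x ≤ C * (x ⬝ᵥ x) := by
  rw [hA.dotProduct_mulVec_eq_sum_eigenvalues, ← hA.sum_sq_dotProduct_eigenvectorBasis, mul_sum]
  gcongr with i
  exact h i

end Matrix.IsHermitian

section SingularValues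

variable {N M : ℕ}

theorem singularValues_nonneg (A : Matrix (Fin N) (Fin M) ℝ) (i : Fin N) :
    0 ≤ singularValues A i :=
  Real.sqrt_nonneg _

theorem euclNorm_vecMul (A : Matrix (Fin N) (Fin M) ℝ) (x : Fin N → ℝ) :
    euclNorm (x ᵥ* A) = √(x ⬝ᵥ (A * Aᴴ) *ᵥ x) := by
  rw [euclNorm_eq_sqrt_dotProduct, ← mulVec_mulVec, dotProduct_mulVec,
    conjTranspose_eq_transpose_of_trivial, mulVec_transpose]

theorem mul_le_euclNorm_vecMul {A : Matrix (Fin N) (Fin M) ℝ} {a r : ℝ} (ha : 0 ≤ a)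
    (hA : ∀ i, a ≤ singularValues A i) {x : Fin N → ℝ} (hx : r ≤ euclNorm x) :
    a * r ≤ euclNorm (x ᵥ* A) := by
  have hA' := isHermitian_mul_conjTranspose_self A
  have heig (i : Fin N) : a ^ 2 ≤ hA'.eigenvalues i :=
    (Real.le_sqrt ha (eigenvalues_self_mul_conjTranspose_nonneg A i)).mp (hA i)
  calc a * r ≤ a * euclNorm x := mul_le_mul_of_nonneg_left hx ha
    _ = √(a ^ 2 * (x ⬝ᵥ x)) := by
      rw [Real.sqrt_mul (sq_nonneg a), Real.sqrt_sq ha, euclNorm_eq_sqrt_dotProduct]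
    _ ≤ euclNorm (x ᵥ* A) := by
      rw [euclNorm_vecMul]
      exact Real.sqrt_le_sqrt (hA'.mul_dotProduct_self_le_dotProduct_mulVec heig x)

theorem euclNorm_vecMul_le_mul {A : Matrix (Fin N) (Fin M) ℝ} {b r : ℝ} (hb : 0 ≤ b)
    (hA : ∀ i, singularValues A i ≤ b) {x : Fin N → ℝ} (hx : euclNorm x ≤ r) :
    euclNorm (x ᵥ* A) ≤ b * r := by
  have hA' := isHermitian_mul_conjTranspose_self A
  have heig (i : Fin N) : hA'.eigenvalues i ≤ b ^ 2 :=
    (Real.sqrt_le_left hb).mp (hA i)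
  calc euclNorm (x ᵥ* A)
      ≤ √(b ^ 2 * (x ⬝ᵥ x)) := by
        rw [euclNorm_vecMul]
        exact Real.sqrt_le_sqrt (hA'.dotProduct_mulVec_le_mul_dotProduct_self heig x)
    _ = b * euclNorm x := by
      rw [Real.sqrt_mul (sq_nonneg b), Real.sqrt_sq hb, euclNorm_eq_sqrt_dotProduct]
    _ ≤ b * r := mul_le_mul_of_nonneg_left hx hb

end SingularValues

section DescProd

variable {n : ℕ} (J : ℕ → Matrix (Fin n) (Fin n) ℝ) (l : ℕ)

theorem vecMul_descProd_succ (c : ℕ) (x : Fin n → ℝ) :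
    x ᵥ* descProd J l (c + 1) = x ᵥ* J (l + c) ᵥ* descProd J l c := by
  rw [descProd, vecMul_vecMul]

theorem prod_mul_le_euclNorm_vecMul_descProd {a : ℕ → ℝ} (c : ℕ)
    (ha : ∀ j ∈ Ico l (l + c), 0 ≤ a j)
    (hJ : ∀ j ∈ Ico l (l + c), ∀ i, a j ≤ singularValues (J j) i)
    {x : Fin n → ℝ} {r : ℝ} (hx : r ≤ euclNorm x) :
    (∏ j ∈ Ico l (l + c), a j) * r ≤ euclNorm (x ᵥ* descProd J l c) := by
  induction c generalizing x r with
  | zero => simpa [descProd] using hx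
  | succ c ih =>
    have hlast : l + c ∈ Ico l (l + (c + 1)) := by simp
    have hsub : Ico l (l + c) ⊆ Ico l (l + (c + 1)) := Ico_subset_Ico_right (by omega)
    rw [← add_assoc, prod_Ico_succ_top (Nat.le_add_right l c), mul_assoc,
      vecMul_descProd_succ]
    exact ih (fun j hj => ha j (hsub hj)) (fun j hj => hJ j (hsub hj))
      (mul_le_euclNorm_vecMul (ha _ hlast) (hJ _ hlast) hx)

theorem euclNorm_vecMul_descProd_le_prod_mul {b : ℕ → ℝ} (c : ℕ)
    (hb : ∀ j ∈ Ico l (l + c), 0 ≤ b j)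
    (hJ : ∀ j ∈ Ico l (l + c), ∀ i, singularValues (J j) i ≤ b j)
    {x : Fin n → ℝ} {r : ℝ} (hx : euclNorm x ≤ r) :
    euclNorm (x ᵥ* descProd J l c) ≤ (∏ j ∈ Ico l (l + c), b j) * r := by
  induction c generalizing x r with
  | zero => simpa [descProd] using hx
  | succ c ih =>
    have hlast : l + c ∈ Ico l (l + (c + 1)) := by simp
    have hsub : Ico l (l + c) ⊆ Ico l (l + (c + 1)) := Ico_subset_Ico_right (by omega)
    rw [← add_assoc, prod_Ico_succ_top (Nat.le_add_right l c), mul_assoc,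
      vecMul_descProd_succ]
    exact ih (fun j hj => hb j (hsub hj)) (fun j hj => hJ j (hsub hj))
      (euclNorm_vecMul_le_mul (hb _ hlast) (hJ _ hlast) hx)

end DescProd

section Layer

variable {N n m L l : ℕ} (W : Matrix (Fin N) (Fin n) ℝ) (J : ℕ → Matrix (Fin n) (Fin n) ℝ)
  (G : Matrix (Fin n) (Fin m) ℝ)

theorem mul_le_euclNorm_vecMul_descProd_vecMul (hl : l ≤ L) {aW aG : ℝ} {aJ : ℕ → ℝ}
    (haW : 0 ≤ aW) (hW : ∀ i, aW ≤ singularValues W i)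
    (haJ : ∀ j ∈ Ico l L, 0 ≤ aJ j) (hJ : ∀ j ∈ Ico l L, ∀ i, aJ j ≤ singularValues (J j) i)
    (haG : 0 ≤ aG) (hG : ∀ i, aG ≤ singularValues G i) {x : Fin N → ℝ} {r : ℝ}
    (hx : r ≤ euclNorm x) :
    aW * aG * (∏ j ∈ Ico l L, aJ j) * r ≤ euclNorm (x ᵥ* W ᵥ* descProd J l (L - l) ᵥ* G) := by
  have hIco : Ico l L = Ico l (l + (L - l)) := by rw [Nat.add_sub_cancel' hl]
  rw [hIco] at haJ hJ ⊢
  calc aW * aG * (∏ j ∈ Ico l (l + (L - l)), aJ j) * r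
      = aG * ((∏ j ∈ Ico l (l + (L - l)), aJ j) * (aW * r)) := by ring
    _ ≤ _ := mul_le_euclNorm_vecMul haG hG <|
      prod_mul_le_euclNorm_vecMul_descProd J l (L - l) haJ hJ <| mul_le_euclNorm_vecMul haW hW hx

theorem euclNorm_vecMul_descProd_vecMul_le_mul (hl : l ≤ L) {bW bG : ℝ} {bJ : ℕ → ℝ}
    (hbW : 0 ≤ bW) (hW : ∀ i, singularValues W i ≤ bW)
    (hbJ : ∀ j ∈ Ico l L, 0 ≤ bJ j) (hJ : ∀ j ∈ Ico l L, ∀ i, singularValues (J j) i ≤ bJ j)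
    (hbG : 0 ≤ bG) (hG : ∀ i, singularValues G i ≤ bG) {x : Fin N → ℝ} {r : ℝ}
    (hx : euclNorm x ≤ r) :
    euclNorm (x ᵥ* W ᵥ* descProd J l (L - l) ᵥ* G) ≤ bW * bG * (∏ j ∈ Ico l L, bJ j) * r := by
  have hIco : Ico l L = Ico l (l + (L - l)) := by rw [Nat.add_sub_cancel' hl]
  rw [hIco] at hbJ hJ ⊢
  calc euclNorm (x ᵥ* W ᵥ* descProd J l (L - l) ᵥ* G)
      ≤ bG * ((∏ j ∈ Ico l (l + (L - l)), bJ j) * (bW * r)) :=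
        euclNorm_vecMul_le_mul hbG hG <| euclNorm_vecMul_descProd_le_prod_mul J l (L - l) hbJ hJ <|
          euclNorm_vecMul_le_mul hbW hW hx
    _ = bW * bG * (∏ j ∈ Ico l (l + (L - l)), bJ j) * r := by ring

end Layer

theorem token_gradient_bound_TRGRPO_general (L : ℕ) (N n : ℕ) (hn : 0 < n)
    (m : ℕ → ℕ)
    (p : Fin N → ℝ) (hp : ∀ j, 0 ≤ p j) (hsum : ∑ j, p j = 1) (k : Fin N)
    (w : ℝ) (hw : 0 < w) (γ : ℝ)
    (W : Matrix (Fin N) (Fin n) ℝ) (aW bW : ℝ) (haW : 0 ≤ aW)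
    (hW : ∀ i, aW ≤ singularValues W i ∧ singularValues W i ≤ bW)
    (J : ℕ → Matrix (Fin n) (Fin n) ℝ) (aJ bJ : ℕ → ℝ) (haJ : ∀ j < L, 0 ≤ aJ j)
    (hJ : ∀ j < L, ∀ i, aJ j ≤ singularValues (J j) i ∧ singularValues (J j) i ≤ bJ j)
    (G : ∀ l, Matrix (Fin n) (Fin (m l)) ℝ) (aG bG : ℕ → ℝ) (haG : ∀ l < L, 0 ≤ aG l)
    (hG : ∀ l < L, ∀ i, aG l ≤ singularValues (G l) i ∧ singularValues (G l) i ≤ bG l) :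
    (w * (1 - p k) * |γ| / Real.sqrt L) *
        ∑ l ∈ Finset.range L, (aW * aG l * ∏ j ∈ Finset.Ico l L, aJ j)
      ≤ Real.sqrt (∑ l ∈ Finset.range L,
          euclNorm ((γ * w) •
            ((((Pi.single k 1 : Fin N → ℝ) - p) ᵥ* W ᵥ* descProd J l (L - l)) ᵥ* G l)) ^ 2) ∧
    Real.sqrt (∑ l ∈ Finset.range L,
          euclNorm ((γ * w) •
            ((((Pi.single k 1 : Fin N → ℝ) - p) ᵥ* W ᵥ* descProd J l (L - l)) ᵥ* G l)) ^ 2)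
      ≤ Real.sqrt 2 * (w * (1 - p k) * |γ|) *
          ∑ l ∈ Finset.range L, (bW * bG l * ∏ j ∈ Finset.Ico l L, bJ j) := by
  set v : Fin N → ℝ := Pi.single k 1 - p
  have hnorm (l : ℕ) : euclNorm ((γ * w) • (v ᵥ* W ᵥ* descProd J l (L - l) ᵥ* G l)) =
      w * |γ| * euclNorm (v ᵥ* W ᵥ* descProd J l (L - l) ᵥ* G l) := by
    rw [euclNorm_smul, abs_mul, abs_of_pos hw, mul_comm |γ|]
  have hjL {l j : ℕ} (hj : j ∈ Ico l L) : j < L := (mem_Ico.mp hj).2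
  constructor
  · calc w * (1 - p k) * |γ| / √L * ∑ l ∈ range L, aW * aG l * ∏ j ∈ Ico l L, aJ j
        = (∑ l ∈ range L, w * |γ| * (aW * aG l * (∏ j ∈ Ico l L, aJ j) * (1 - p k))) /
            √(#(range L) : ℝ) := by
          rw [card_range, div_mul_eq_mul_div, mul_sum]
          exact congrArg (· / _) (sum_congr rfl fun _ _ => by ring)
      _ ≤ _ := sum_div_sqrt_card_le_sqrt_sum_sq fun l hl => by
          have hl' := mem_range.mp hl
          rw [hnorm]
          exact mul_le_mul_of_nonneg_left (mul_le_euclNorm_vecMul_descProd_vecMul W J (G l) hl'.le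
            haW (fun i => (hW i).1) (fun j hj => haJ j (hjL hj))
            (fun j hj i => (hJ j (hjL hj) i).1) (haG l hl') (fun i => (hG l hl' i).1)
            (one_sub_le_euclNorm_single_sub p k)) (by positivity)
  · have hbW : 0 ≤ bW := (singularValues_nonneg W k).trans (hW k).2
    have hbJ (j : ℕ) (hj : j < L) : 0 ≤ bJ j :=
      (singularValues_nonneg (J j) ⟨0, hn⟩).trans (hJ j hj _).2
    have hbG (l : ℕ) (hl : l < L) : 0 ≤ bG l :=
      (singularValues_nonneg (G l) ⟨0, hn⟩).trans (hG l hl _).2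
    calc _ ≤ ∑ l ∈ range L, w * |γ| * (bW * bG l * (∏ j ∈ Ico l L, bJ j) * (√2 * (1 - p k))) :=
          sqrt_sum_sq_le_sum (fun _ _ => euclNorm_nonneg _) fun l hl => by
            have hl' := mem_range.mp hl
            rw [hnorm]
            exact mul_le_mul_of_nonneg_left (euclNorm_vecMul_descProd_vecMul_le_mul W J (G l)
              hl'.le hbW (fun i => (hW i).2) (fun j hj => hbJ j (hjL hj))
              (fun j hj i => (hJ j (hjL hj) i).2) (hbG l hl') (fun i => (hG l hl' i).2)
              (euclNorm_single_sub_le hp hsum k)) (by positivity)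
      _ = _ := by
          rw [mul_sum]
          exact sum_congr rfl fun _ _ => by ring

/-- Token gradient bound for TR-GRPO: with layers indexed `l = 0, …, L-1`, blocks
`g_l = γ · w · (e_k − p) · W · (J_{L-1} ⋯ J_l) · G_l` and `‖g‖₂ = √(∑ l ‖g_l‖₂²)`,
`(w (1-π) |γ| / √L) ∑_l a^W a^G_l ∏_{j=l}^{L-1} a^J_j ≤ ‖g‖₂ ≤
 √2 w (1-π) |γ| ∑_l b^W b^G_l ∏_{j=l}^{L-1} b^J_j`. -/
theorem token_gradient_bound_TRGRPO (L : ℕ) (hL : 1 ≤ L) (N n : ℕ) (hN : 0 < N) (hn : 0 < n)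
    (m : ℕ → ℕ) (hm : ∀ l < L, 0 < m l)
    (p : Fin N → ℝ) (hp : ∀ j, 0 ≤ p j) (hsum : ∑ j, p j = 1) (k : Fin N)
    (w : ℝ) (hw : 0 < w) (γ : ℝ)
    (W : Matrix (Fin N) (Fin n) ℝ) (aW bW : ℝ) (haW : 0 ≤ aW)
    (hW : ∀ i, aW ≤ singularValues W i ∧ singularValues W i ≤ bW)
    (J : ℕ → Matrix (Fin n) (Fin n) ℝ) (aJ bJ : ℕ → ℝ) (haJ : ∀ j < L, 0 ≤ aJ j)
    (hJ : ∀ j < L, ∀ i, aJ j ≤ singularValues (J j) i ∧ singularValues (J j) i ≤ bJ j)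
    (G : ∀ l, Matrix (Fin n) (Fin (m l)) ℝ) (aG bG : ℕ → ℝ) (haG : ∀ l < L, 0 ≤ aG l)
    (hG : ∀ l < L, ∀ i, aG l ≤ singularValues (G l) i ∧ singularValues (G l) i ≤ bG l) :
    (w * (1 - p k) * |γ| / Real.sqrt L) *
        ∑ l ∈ Finset.range L, (aW * aG l * ∏ j ∈ Finset.Ico l L, aJ j)
      ≤ Real.sqrt (∑ l ∈ Finset.range L,
          euclNorm ((γ * w) •
            ((((Pi.single k 1 : Fin N → ℝ) - p) ᵥ* W ᵥ* descProd J l (L - l)) ᵥ* G l)) ^ 2) ∧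
    Real.sqrt (∑ l ∈ Finset.range L,
          euclNorm ((γ * w) •
            ((((Pi.single k 1 : Fin N → ℝ) - p) ᵥ* W ᵥ* descProd J l (L - l)) ᵥ* G l)) ^ 2)
      ≤ Real.sqrt 2 * (w * (1 - p k) * |γ|) *
          ∑ l ∈ Finset.range L, (bW * bG l * ∏ j ∈ Finset.Ico l L, bJ j) :=
  token_gradient_bound_TRGRPO_general L N n hn m p hp hsum k w hw γ W aW bW haW hW J aJ bJ haJ hJ G
    aG bG haG hG
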